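/- arXiv:2510.11227 — 4 statements merged into one kernel-verified Lean document; each statement's English description precedes it below -/
import Mathlib

section
/- Let x ∈ ℝⁿ and Cᵢ ⊆ ℝⁿ (i = 1,…,m) nonempty closed convex with Cᵢ depending only on coordinates in Nᵢ, l_j = |{i : j ∈ Nᵢ}| ≥ 1, and let X = T⁻¹(x) ∈ 𝐂₂. Then T(P_{𝐂₂}(P_{𝐂₁}(X)))_j = (1/l_j) Σ_{i : j ∈ Nᵢ} (P_{Cᵢ}(x))_j for every j, i.e., one product-space Dykstra-style step reproduces the component-averaged projection. -/
/-!
Both projections are computed explicitly and identified through the uniqueness of nearest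
points in convex sets. The projection onto `𝐂₁ = ∏ Cᵢ` acts row by row; as `Cᵢ` only constrains
the coordinates in `Nᵢ` and row `i` of `T⁻¹ x` vanishes outside `Nᵢ`, row `i` of `P_{𝐂₁}(T⁻¹ x)`
is `P_{Cᵢ} x` on `Nᵢ` and `0` elsewhere. The projection onto `𝐂₂` replaces each column, on its
support `{i | j ∈ Nᵢ}`, by its mean, the least-squares best constant. Column averaging `T` then
returns the averaged componentwise projections.
-/

/-- `l_j`, the number of constraints `i` with `j ∈ Nᵢ`. -/
def lcount {m n : ℕ} (N : Fin m → Finset (Fin n)) (j : Fin n) : ℕ :=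
  (Finset.univ.filter fun i => j ∈ N i).card

/-- The basis matrix `V^{(k)}` with `V^{(k)}_{ij} = 1` iff `j = k` and `k ∈ Nᵢ`. -/
def Vmat {m n : ℕ} (N : Fin m → Finset (Fin n)) (k : Fin n) :
    EuclideanSpace ℝ (Fin m × Fin n) :=
  WithLp.toLp 2 fun q => if q.2 = k ∧ k ∈ N q.1 then 1 else 0

/-- The subspace `𝐂₂`. -/
def C2set {m n : ℕ} (N : Fin m → Finset (Fin n)) :
    Set (EuclideanSpace ℝ (Fin m × Fin n)) :=
  {X | (∀ i j, j ∉ N i → X (i, j) = 0) ∧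
    ∀ i k j, j ∈ N i → j ∈ N k → X (i, j) = X (k, j)}

/-- The set `𝐂₁ = ∏ᵢ Cᵢ` of matrices whose `i`-th row lies in `Cᵢ`. -/
def C1set {m n : ℕ} (C : Fin m → Set (EuclideanSpace ℝ (Fin n))) :
    Set (EuclideanSpace ℝ (Fin m × Fin n)) :=
  {X | ∀ i, WithLp.toLp 2 (fun j => X (i, j)) ∈ C i}

/-- The coefficient map `T`, realized on `𝐂₂` by column averaging. -/
noncomputable def Tmap {m n : ℕ} (N : Fin m → Finset (Fin n))
    (X : EuclideanSpace ℝ (Fin m × Fin n)) : EuclideanSpace ℝ (Fin n) :=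
  WithLp.toLp 2 fun j => (∑ i ∈ Finset.univ.filter fun i => j ∈ N i, X (i, j)) / (lcount N j : ℝ)

open Finset

section NearestPoint

variable {E : Type*} [NormedAddCommGroup E] [InnerProductSpace ℝ E]

def IsNearest (S : Set E) (u v : E) : Prop :=
  v ∈ S ∧ ∀ w ∈ S, ‖u - v‖ ≤ ‖u - w‖

/-- With `m` the midpoint of `v` and `w`, the parallelogram law gives
`‖v - w‖² = 2‖u - v‖² + 2‖u - w‖² - 4‖u - m‖²`, and `m ∈ S` makes this `≤ 0`. -/
theorem IsNearest.eq {S : Set E} (hS : Convex ℝ S) {u v w : E}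
    (hv : IsNearest S u v) (hw : IsNearest S u w) : v = w := by
  have hmid : midpoint ℝ v w ∈ S := hS.midpoint_mem hv.1 hw.1
  have hv_le := hv.2 _ hmid
  have hw_le := hw.2 _ hmid
  have hsum : (u - v) + (u - w) = (2 : ℝ) • (u - midpoint ℝ v w) := by
    rw [midpoint_eq_smul_add, invOf_eq_inv]; module
  have hpar := parallelogram_law_with_norm ℝ (u - v) (u - w)
  rw [hsum, norm_smul, sub_sub_sub_cancel_left, Real.norm_two] at hpar
  have hzero : ‖w - v‖ = 0 := by
    nlinarith [norm_nonneg (w - v), mul_self_le_mul_self (norm_nonneg _) hv_le,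
      mul_self_le_mul_self (norm_nonneg _) hw_le]
  exact (sub_eq_zero.mp (norm_eq_zero.mp hzero)).symm

end NearestPoint

theorem EuclideanSpace.norm_le_norm_iff_sum_sq_le {ι : Type*} [Fintype ι]
    (a b : EuclideanSpace ℝ ι) : ‖a‖ ≤ ‖b‖ ↔ ∑ q, a q ^ 2 ≤ ∑ q, b q ^ 2 := by
  rw [← sq_le_sq₀ (norm_nonneg _) (norm_nonneg _), EuclideanSpace.real_norm_sq_eq,
    EuclideanSpace.real_norm_sq_eq]

theorem Finset.sum_sq_sub_mean_le {ι : Type*} (s : Finset ι) (c : ι → ℝ) (b : ℝ) :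
    ∑ i ∈ s, (c i - (∑ i ∈ s, c i) / #s) ^ 2 ≤ ∑ i ∈ s, (c i - b) ^ 2 := by
  rcases s.eq_empty_or_nonempty with rfl | hs
  · simp
  set a := (∑ i ∈ s, c i) / #s
  have hsum : ∑ i ∈ s, c i = #s * a := by
    have : (#s : ℝ) ≠ 0 := by exact_mod_cast hs.card_ne_zero
    exact (mul_div_cancel₀ _ this).symm
  have hdecomp : ∑ i ∈ s, (c i - b) ^ 2 = ∑ i ∈ s, (c i - a) ^ 2 + #s * (a - b) ^ 2 := by
    have hterm : ∀ i, (c i - b) ^ 2 = (c i - a) ^ 2 + 2 * (a - b) * c i - (a ^ 2 - b ^ 2) := by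
      intro i; ring
    simp only [hterm, sum_sub_distrib, sum_add_distrib, ← mul_sum, hsum, sum_const,
      nsmul_eq_mul]
    ring
  rw [hdecomp]
  nlinarith [sq_nonneg (a - b), (#s).cast_nonneg (α := ℝ)]

section ProductSpace

variable {m n : ℕ} (N : Fin m → Finset (Fin n))

/-- `maskMat N (fun q => x q.2)` is `T⁻¹ x`, and `𝐂₂` consists of the `maskMat N (fun q => g q.2)`. -/
def maskMat (f : Fin m × Fin n → ℝ) : EuclideanSpace ℝ (Fin m × Fin n) :=
  WithLp.toLp 2 fun q => if q.2 ∈ N q.1 then f q else 0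

@[simp]
theorem maskMat_apply (f : Fin m × Fin n → ℝ) (q : Fin m × Fin n) :
    maskMat N f q = if q.2 ∈ N q.1 then f q else 0 :=
  rfl

theorem sum_smul_Vmat (x : EuclideanSpace ℝ (Fin n)) :
    ∑ j, x j • Vmat N j = maskMat N fun q => x q.2 := by
  ext ⟨i, j⟩
  simp [Vmat, Finset.sum_apply, ite_and]

theorem Tmap_maskMat (f : Fin m × Fin n → ℝ) (j : Fin n) :
    Tmap N (maskMat N f) j = (∑ i ∈ univ.filter fun i => j ∈ N i, f (i, j)) / lcount N j := by
  simp only [Tmap, maskMat_apply]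
  congr 1
  exact sum_congr rfl fun i hi => if_pos (mem_filter.mp hi).2

theorem lcount_ne_zero (hcov : ∀ j, ∃ i, j ∈ N i) (j : Fin n) : lcount N j ≠ 0 := by
  obtain ⟨i, hi⟩ := hcov j
  exact card_ne_zero.mpr ⟨i, mem_filter.mpr ⟨mem_univ i, hi⟩⟩

theorem Tmap_maskMat_of_col (hcov : ∀ j, ∃ i, j ∈ N i) (g : Fin n → ℝ) (j : Fin n) :
    Tmap N (maskMat N fun q => g q.2) j = g j := by
  simp only [Tmap_maskMat, sum_const, nsmul_eq_mul]
  exact mul_div_cancel_left₀ _ (Nat.cast_ne_zero.mpr (lcount_ne_zero N hcov j))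

theorem convex_C1set {C : Fin m → Set (EuclideanSpace ℝ (Fin n))}
    (hconv : ∀ i, Convex ℝ (C i)) : Convex ℝ (C1set C) :=
  fun _ hA _ hB _ _ ha hb hab i => hconv i (hA i) (hB i) ha hb hab

theorem convex_C2set : Convex ℝ (C2set N) := by
  intro A hA B hB a b _ _ _
  refine ⟨fun i j hj => ?_, fun i k j hi hk => ?_⟩
  · simp [hA.1 i j hj, hB.1 i j hj]
  · simp [hA.2 i k j hi hk, hB.2 i k j hi hk]

theorem isNearest_C1set {C : Fin m → Set (EuclideanSpace ℝ (Fin n))}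
    (hdep : ∀ i (x y : EuclideanSpace ℝ (Fin n)),
      (∀ j ∈ N i, x j = y j) → (x ∈ C i ↔ y ∈ C i))
    {x : EuclideanSpace ℝ (Fin n)} {Q : Fin m → EuclideanSpace ℝ (Fin n)}
    (hQ : ∀ i, IsNearest (C i) x (Q i)) :
    IsNearest (C1set C) (maskMat N fun q => x q.2) (maskMat N fun q => Q q.1 q.2) := by
  refine ⟨fun i => (hdep i (Q i) _ fun j hj => by simp [hj]).mp (hQ i).1, fun W hW => ?_⟩
  rw [EuclideanSpace.norm_le_norm_iff_sum_sq_le, Fintype.sum_prod_type, Fintype.sum_prod_type]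
  refine sum_le_sum fun i _ => ?_
  -- `Cᵢ` only sees the coordinates in `Nᵢ`, so patching row `i` of `W` with `x` keeps it in `Cᵢ`.
  set w : EuclideanSpace ℝ (Fin n) := WithLp.toLp 2 fun j => if j ∈ N i then W (i, j) else x j
  have hw : w ∈ C i := (hdep i _ w fun j hj => by simp [w, hj]).mp (hW i)
  calc ∑ j, ((maskMat N fun q => x q.2) - maskMat N fun q => Q q.1 q.2) (i, j) ^ 2
      ≤ ∑ j, (x - Q i) j ^ 2 :=
        sum_le_sum fun j _ => by by_cases hj : j ∈ N i <;> simp [hj]; positivity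
    _ ≤ ∑ j, (x - w) j ^ 2 :=
        (EuclideanSpace.norm_le_norm_iff_sum_sq_le _ _).mp ((hQ i).2 w hw)
    _ ≤ ∑ j, ((maskMat N fun q => x q.2) - W) (i, j) ^ 2 :=
        sum_le_sum fun j _ => by by_cases hj : j ∈ N i <;> simp [w, hj]; positivity

theorem isNearest_C2set (P : EuclideanSpace ℝ (Fin m × Fin n)) :
    IsNearest (C2set N) P (maskMat N fun q => Tmap N P q.2) := by
  refine ⟨⟨fun i j hj => by simp [hj], fun i k j hi hk => by simp [hi, hk]⟩, fun W hW => ?_⟩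
  rw [EuclideanSpace.norm_le_norm_iff_sum_sq_le, Fintype.sum_prod_type_right,
    Fintype.sum_prod_type_right]
  refine sum_le_sum fun j _ => ?_
  set F := univ.filter fun i => j ∈ N i
  have hin : ∑ i ∈ F, (P (i, j) - Tmap N P j) ^ 2 ≤ ∑ i ∈ F, (P (i, j) - W (i, j)) ^ 2 := by
    rcases F.eq_empty_or_nonempty with hF | ⟨i₀, hi₀⟩
    · simp [hF]
    have hcol : ∀ i ∈ F, W (i, j) = W (i₀, j) := fun i hi =>
      hW.2 i i₀ j (mem_filter.mp hi).2 (mem_filter.mp hi₀).2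
    calc ∑ i ∈ F, (P (i, j) - Tmap N P j) ^ 2
        ≤ ∑ i ∈ F, (P (i, j) - W (i₀, j)) ^ 2 := sum_sq_sub_mean_le F (fun i => P (i, j)) _
      _ = ∑ i ∈ F, (P (i, j) - W (i, j)) ^ 2 := sum_congr rfl fun i hi => by rw [hcol i hi]
  have hout : ∀ i ∈ univ.filter fun i => j ∉ N i, W (i, j) = 0 := fun i hi =>
    hW.1 i j (mem_filter.mp hi).2
  simp only [PiLp.sub_apply, maskMat_apply]
  rw [← sum_filter_add_sum_filter_not univ (fun i => j ∈ N i),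
    ← sum_filter_add_sum_filter_not univ (fun i => j ∈ N i)]
  refine add_le_add ((sum_congr rfl fun i hi => ?_).trans_le hin)
    (sum_congr rfl fun i hi => ?_).le
  · rw [if_pos (mem_filter.mp hi).2]
  · rw [if_neg (mem_filter.mp hi).2, hout i hi]

end ProductSpace

theorem stmt8_general {m n : ℕ} (N : Fin m → Finset (Fin n)) (hcov : ∀ j, ∃ i, j ∈ N i)
    (C : Fin m → Set (EuclideanSpace ℝ (Fin n)))
    (hconv : ∀ i, Convex ℝ (C i))
    (hdep : ∀ i (x y : EuclideanSpace ℝ (Fin n)),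
      (∀ j ∈ N i, x j = y j) → (x ∈ C i ↔ y ∈ C i))
    (x : EuclideanSpace ℝ (Fin n))
    (X : EuclideanSpace ℝ (Fin m × Fin n)) (hX : X = ∑ j : Fin n, x j • Vmat N j)
    (P Z : EuclideanSpace ℝ (Fin m × Fin n))
    (hP : P ∈ C1set C ∧ ∀ W ∈ C1set C, ‖X - P‖ ≤ ‖X - W‖)
    (hZ : Z ∈ C2set N ∧ ∀ W ∈ C2set N, ‖P - Z‖ ≤ ‖P - W‖)
    (Q : Fin m → EuclideanSpace ℝ (Fin n))
    (hQ : ∀ i, Q i ∈ C i ∧ ∀ y ∈ C i, ‖x - Q i‖ ≤ ‖x - y‖) :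
    ∀ j, Tmap N Z j =
      (1 / (lcount N j : ℝ)) * ∑ i ∈ Finset.univ.filter fun i => j ∈ N i, Q i j := by
  rw [sum_smul_Vmat] at hX
  subst hX
  have hPQ : P = maskMat N fun q => Q q.1 q.2 :=
    IsNearest.eq (convex_C1set hconv) hP (isNearest_C1set N hdep hQ)
  have hZP : Z = maskMat N fun q => Tmap N P q.2 :=
    IsNearest.eq (convex_C2set N) hZ (isNearest_C2set N P)
  intro j
  rw [hZP, Tmap_maskMat_of_col N hcov, hPQ, Tmap_maskMat, one_div_mul_eq_div]

/-- One product-space Dykstra-style step reproduces the component-averaged projection: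
for `X = T⁻¹ x ∈ 𝐂₂`, we have `T(P_{𝐂₂}(P_{𝐂₁}(X)))_j = (1/l_j) ∑_{i : j ∈ Nᵢ} (P_{Cᵢ} x)_j`. -/
theorem stmt8 {m n : ℕ} (N : Fin m → Finset (Fin n)) (hcov : ∀ j, ∃ i, j ∈ N i)
    (C : Fin m → Set (EuclideanSpace ℝ (Fin n)))
    (hne : ∀ i, (C i).Nonempty) (hcl : ∀ i, IsClosed (C i)) (hconv : ∀ i, Convex ℝ (C i))
    (hdep : ∀ i (x y : EuclideanSpace ℝ (Fin n)),
      (∀ j ∈ N i, x j = y j) → (x ∈ C i ↔ y ∈ C i))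
    (x : EuclideanSpace ℝ (Fin n))
    (X : EuclideanSpace ℝ (Fin m × Fin n)) (hX : X = ∑ j : Fin n, x j • Vmat N j)
    (P Z : EuclideanSpace ℝ (Fin m × Fin n))
    (hP : P ∈ C1set C ∧ ∀ W ∈ C1set C, ‖X - P‖ ≤ ‖X - W‖)
    (hZ : Z ∈ C2set N ∧ ∀ W ∈ C2set N, ‖P - Z‖ ≤ ‖P - W‖)
    (Q : Fin m → EuclideanSpace ℝ (Fin n))
    (hQ : ∀ i, Q i ∈ C i ∧ ∀ y ∈ C i, ‖x - Q i‖ ≤ ‖x - y‖) :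
    ∀ j, Tmap N Z j =
      (1 / (lcount N j : ℝ)) * ∑ i ∈ Finset.univ.filter fun i => j ∈ N i, Q i j :=
  stmt8_general N hcov C hconv hdep x X hX P Z hP hZ Q hQ
end

section
/- Under the product-space identification, the Component-Averaged Dykstra iterates x^{(k+1)}_j = (1/l_j) Σ_{i ∈ L_j} (P_{Cᵢ}(x^{(k)} + p^{(k)}_i))_j, p^{(k+1)}_i = x^{(k)} + p^{(k)}_i − P_{Cᵢ}(x^{(k)} + p^{(k)}_i) with x^{(1)} = x, p^{(1)}_i = 0, converge to the weighted projection P^l_C(x) = argmin_{y ∈ C} Σ_j l_j (y_j − x_j)², where C = ∩ᵢ Cᵢ is nonempty. -/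
/-!
Under `u ↦ (u|_{Nᵢ})ᵢ`, realised by masking the `i`-th copy of `ℝⁿ` to the coordinates in
`Nᵢ`, the weighted norm `∑ⱼ lⱼ uⱼ²` becomes the Euclidean norm of the product, the averaging step
becomes the orthogonal projection onto the diagonal subspace `D`, and the blockwise projections
onto the `Cᵢ` become the projection onto `A = ∏ᵢ Cᵢ`. The iteration is thus Dykstra's algorithm for
`A` and `D`, and `A ∩ D` is the image of `⋂ᵢ Cᵢ`.

Dykstra's algorithm converges by the Boyle–Dykstra argument. With `e_k = x₀ - x_k - p_k ∈ Dᗮ` and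
`r_k = q_k - x_{k+1} ∈ Dᗮ`, the quantity `Φ_k(y) = ‖x_{k+1} - y‖²/2 + ⟪p_{k+1}, q_k - y⟫` decreases
in `k` by at least `‖r_{k+1}‖²/2`, dominates `‖x_{k+1} - y‖²/2` for `y ∈ A`, and depends on `y ∈ D`
only through `‖y - x₀‖²/2`. So the residuals are square-summable, and since
`‖e_K‖² = ∑_{k<K} (2⟪e_k, r_k⟫ + ‖r_k‖²)`, `⟪e_k, r_k⟫` is frequently almost nonnegative. Along
such indices a cluster point `z ∈ A ∩ D` of `x` has `Φ_k(z) → 0`; hence `x → z`, and `z` is the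
point of `A ∩ D` nearest to `x₀`.
-/

open Filter Topology
open scoped RealInnerProductSpace

lemma frequently_neg_lt_of_le_sum_range {f : ℕ → ℝ} {B : ℝ}
    (h : ∀ K, B ≤ ∑ k ∈ Finset.range K, f k) {ε : ℝ} (hε : 0 < ε) :
    ∃ᶠ k in atTop, -ε < f k := by
  rw [frequently_atTop]
  intro a
  by_contra! hle
  have hsum : ∀ t : ℕ, ∑ k ∈ Finset.range (a + t), f k ≤ ∑ k ∈ Finset.range a, f k - t * ε := by
    intro t
    induction t with
    | zero => simp
    | succ t ih =>
      rw [← add_assoc, Finset.sum_range_succ]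
      have := hle (a + t) (Nat.le_add_right a t)
      push_cast
      linarith
  obtain ⟨t, ht⟩ := exists_nat_gt ((∑ k ∈ Finset.range a, f k - B) / ε)
  rw [div_lt_iff₀ hε] at ht
  linarith [h (a + t), hsum t]

variable {E : Type*} [NormedAddCommGroup E] [InnerProductSpace ℝ E]

/-- Dykstra's algorithm for a set `A` and a subspace `D`, started at `x 0 ∈ D`, with
`q k = P_A (x k + p k)` and `x (k + 1) = P_D (q k)` given by their characterisations; the
correction term of the `D`-step vanishes because `P_D` is linear. -/
structure IsDykstraSeq (A : Set E) (D : Submodule ℝ E) (x p q : ℕ → E) : Prop where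
  x_zero_mem : x 0 ∈ D
  p_zero : p 0 = 0
  q_mem : ∀ k, q k ∈ A
  q_nearest : ∀ k, ∀ y ∈ A, ‖x k + p k - q k‖ ≤ ‖x k + p k - y‖
  p_succ : ∀ k, p (k + 1) = x k + p k - q k
  x_succ_mem : ∀ k, x (k + 1) ∈ D
  q_sub_x_succ_mem : ∀ k, q k - x (k + 1) ∈ Dᗮ

noncomputable def dykstraLyapunov (x p q : ℕ → E) (k : ℕ) (y : E) : ℝ :=
  ‖x (k + 1) - y‖ ^ 2 / 2 + ⟪p (k + 1), q k - y⟫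

namespace IsDykstraSeq

variable {A : Set E} {D : Submodule ℝ E} {x p q : ℕ → E}

lemma x_mem (h : IsDykstraSeq A D x p q) : ∀ k, x k ∈ D
  | 0 => h.x_zero_mem
  | k + 1 => h.x_succ_mem k

lemma inner_q_sub_x_succ_eq_zero (h : IsDykstraSeq A D x p q) (k : ℕ) {y : E} (hy : y ∈ D) :
    ⟪q k - x (k + 1), y⟫ = 0 :=
  Submodule.inner_left_of_mem_orthogonal hy (h.q_sub_x_succ_mem k)

lemma sub_sub_mem_orthogonal (h : IsDykstraSeq A D x p q) (k : ℕ) :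
    x 0 - x k - p k ∈ Dᗮ := by
  induction k with
  | zero => simp [h.p_zero]
  | succ k ih =>
    have : x 0 - x (k + 1) - p (k + 1) = (x 0 - x k - p k) + (q k - x (k + 1)) := by
      rw [h.p_succ]; abel
    rw [this]
    exact add_mem ih (h.q_sub_x_succ_mem k)

lemma inner_p_succ_le_zero (h : IsDykstraSeq A D x p q) (hA : Convex ℝ A) (k : ℕ) {y : E}
    (hy : y ∈ A) : ⟪p (k + 1), y - q k⟫ ≤ 0 := by
  have : Nonempty A := ⟨⟨q k, h.q_mem k⟩⟩
  have hnear : ‖x k + p k - q k‖ = ⨅ w : A, ‖x k + p k - w‖ :=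
    le_antisymm (le_ciInf fun w => h.q_nearest k w w.2)
      (ciInf_le ⟨0, Set.forall_mem_range.2 fun _ => norm_nonneg _⟩ (⟨q k, h.q_mem k⟩ : A))
  rw [h.p_succ]
  exact (norm_eq_iInf_iff_real_inner_le_zero hA (h.q_mem k)).1 hnear y hy

local notation "Φ" => dykstraLyapunov x p q

lemma sq_norm_le_lyapunov (h : IsDykstraSeq A D x p q) (hA : Convex ℝ A) (k : ℕ) {y : E}
    (hy : y ∈ A) : ‖x (k + 1) - y‖ ^ 2 / 2 ≤ Φ k y := by
  have := h.inner_p_succ_le_zero hA k hy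
  rw [← neg_sub, inner_neg_right] at this
  unfold dykstraLyapunov
  linarith

lemma lyapunov_eq_add_sq_norm (h : IsDykstraSeq A D x p q) (k : ℕ) {y : E} (hy : y ∈ D) :
    Φ k y = Φ k (x 0) + ‖y - x 0‖ ^ 2 / 2 := by
  have he : ⟪x 0 - x (k + 1) - p (k + 1), x 0 - y⟫ = 0 :=
    Submodule.inner_left_of_mem_orthogonal (sub_mem (h.x_zero_mem) hy)
      (h.sub_sub_mem_orthogonal (k + 1))
  unfold dykstraLyapunov
  simp only [← real_inner_self_eq_norm_sq, inner_sub_left, inner_sub_right, real_inner_comm] at he ⊢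
  linarith

lemma lyapunov_succ_add_le (h : IsDykstraSeq A D x p q) (hA : Convex ℝ A) (k : ℕ) {y : E}
    (hy : y ∈ D) : Φ (k + 1) y + ‖q (k + 1) - x (k + 2)‖ ^ 2 / 2 ≤ Φ k y := by
  have hr := h.inner_q_sub_x_succ_eq_zero (k + 1) (sub_mem (h.x_mem (k + 2)) hy)
  have hq := h.inner_p_succ_le_zero hA k (h.q_mem (k + 1))
  have hp := sq_nonneg ‖x (k + 1) - q (k + 1)‖
  unfold dykstraLyapunov
  rw [h.p_succ (k + 1)]
  simp only [← real_inner_self_eq_norm_sq, inner_sub_left, inner_sub_right, inner_add_left,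
    real_inner_comm] at hr hq hp ⊢
  linarith

lemma lyapunov_eq_sub_inner (h : IsDykstraSeq A D x p q) (k : ℕ) {z : E} (hz : z ∈ D) :
    Φ k z = ‖x (k + 1) - z‖ ^ 2 / 2 + ⟪x 0 - x (k + 1), x (k + 1) - z⟫
      - ⟪x 0 - x k - p k, q k - x (k + 1)⟫ - ‖q k - x (k + 1)‖ ^ 2 := by
  have hxz : x (k + 1) - z ∈ D := sub_mem (h.x_mem (k + 1)) hz
  have h1 := h.inner_q_sub_x_succ_eq_zero k (sub_mem h.x_zero_mem (h.x_mem (k + 1)))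
  have h2 := h.inner_q_sub_x_succ_eq_zero k hxz
  have h3 : ⟪x 0 - x k - p k, x (k + 1) - z⟫ = 0 :=
    Submodule.inner_left_of_mem_orthogonal hxz (h.sub_sub_mem_orthogonal k)
  unfold dykstraLyapunov
  rw [h.p_succ k]
  simp only [← real_inner_self_eq_norm_sq, inner_sub_left, inner_sub_right, inner_add_left,
    real_inner_comm] at h1 h2 h3 ⊢
  linarith

lemma sq_norm_sub_sub_eq_sum (h : IsDykstraSeq A D x p q) (K : ℕ) :
    ‖x 0 - x K - p K‖ ^ 2 = ∑ k ∈ Finset.range K,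
      (2 * ⟪x 0 - x k - p k, q k - x (k + 1)⟫ + ‖q k - x (k + 1)‖ ^ 2) := by
  induction K with
  | zero => simp [h.p_zero]
  | succ K ih =>
    have : x 0 - x (K + 1) - p (K + 1) = (x 0 - x K - p K) + (q K - x (K + 1)) := by
      rw [h.p_succ]; abel
    rw [Finset.sum_range_succ, ← ih, this, norm_add_sq_real]
    ring

lemma lyapunov_nonneg (h : IsDykstraSeq A D x p q) (hA : Convex ℝ A) (k : ℕ) {y : E}
    (hy : y ∈ A) : 0 ≤ Φ k y :=
  (div_nonneg (sq_nonneg _) zero_le_two).trans (h.sq_norm_le_lyapunov hA k hy)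

lemma lyapunov_antitone (h : IsDykstraSeq A D x p q) (hA : Convex ℝ A) {y : E} (hy : y ∈ D) :
    Antitone (Φ · y) :=
  antitone_nat_of_succ_le fun k => by
    linarith [h.lyapunov_succ_add_le hA k hy, sq_nonneg ‖q (k + 1) - x (k + 2)‖]

lemma sum_range_sq_norm_le (h : IsDykstraSeq A D x p q) (hA : Convex ℝ A) {y : E} (hyA : y ∈ A)
    (hyD : y ∈ D) (K : ℕ) :
    ∑ k ∈ Finset.range K, ‖q k - x (k + 1)‖ ^ 2 ≤ ‖q 0 - x 1‖ ^ 2 + 2 * Φ 0 y := by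
  have key : ∀ K, ∑ k ∈ Finset.range (K + 1), ‖q k - x (k + 1)‖ ^ 2 + 2 * Φ K y
      ≤ ‖q 0 - x 1‖ ^ 2 + 2 * Φ 0 y := by
    intro K
    induction K with
    | zero => simp
    | succ K ih =>
      rw [Finset.sum_range_succ]
      linarith [h.lyapunov_succ_add_le hA K hyD]
  calc ∑ k ∈ Finset.range K, ‖q k - x (k + 1)‖ ^ 2
      ≤ ∑ k ∈ Finset.range (K + 1), ‖q k - x (k + 1)‖ ^ 2 :=
        Finset.sum_le_sum_of_subset_of_nonneg (Finset.range_subset_range.2 K.le_succ)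
          fun _ _ _ => sq_nonneg _
    _ ≤ _ := by linarith [key K, h.lyapunov_nonneg hA K hyA]

lemma tendsto_q_sub_x_succ_zero (h : IsDykstraSeq A D x p q) (hA : Convex ℝ A) {y : E} (hyA : y ∈ A)
    (hyD : y ∈ D) : Tendsto (fun k => q k - x (k + 1)) atTop (𝓝 0) := by
  have hsq : Tendsto (fun k => ‖q k - x (k + 1)‖ ^ 2) atTop (𝓝 0) :=
    (summable_of_sum_range_le (fun _ => sq_nonneg _)
      (h.sum_range_sq_norm_le hA hyA hyD)).tendsto_atTop_zero
  rw [tendsto_zero_iff_norm_tendsto_zero]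
  simpa using hsq.sqrt

lemma frequently_neg_lt_inner (h : IsDykstraSeq A D x p q) (hA : Convex ℝ A) {y : E}
    (hyA : y ∈ A) (hyD : y ∈ D) {ε : ℝ} (hε : 0 < ε) :
    ∃ᶠ k in atTop, -ε < ⟪x 0 - x k - p k, q k - x (k + 1)⟫ := by
  refine frequently_neg_lt_of_le_sum_range (B := -(‖q 0 - x 1‖ ^ 2 / 2 + Φ 0 y))
    (fun K => ?_) hε
  have hK := h.sq_norm_sub_sub_eq_sum K
  rw [Finset.sum_add_distrib, ← Finset.mul_sum] at hK
  linarith [h.sum_range_sq_norm_le hA hyA hyD K, sq_nonneg ‖x 0 - x K - p K‖]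

lemma exists_subseq_tendsto (h : IsDykstraSeq A D x p q) (hA : Convex ℝ A) [ProperSpace E]
    {y : E} (hyA : y ∈ A) (hyD : y ∈ D) :
    ∃ z, ∃ κ : ℕ → ℕ, StrictMono κ ∧ Tendsto (fun t => x (κ t + 1)) atTop (𝓝 z) ∧
      ∀ t : ℕ, -(1 / (t + 1 : ℝ)) < ⟪x 0 - x (κ t) - p (κ t), q (κ t) - x (κ t + 1)⟫ := by
  obtain ⟨φ, hφ, hφinner⟩ := extraction_forall_of_frequently fun t : ℕ =>
    h.frequently_neg_lt_inner hA hyA hyD (Nat.one_div_pos_of_nat (n := t))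
  have hbdd : ∀ t, x (φ t + 1) ∈ Metric.closedBall y √(2 * Φ 0 y) := fun t => by
    rw [Metric.mem_closedBall, dist_eq_norm]
    refine Real.le_sqrt_of_sq_le ?_
    linarith [h.sq_norm_le_lyapunov hA (φ t) hyA, h.lyapunov_antitone hA hyD (Nat.zero_le (φ t))]
  obtain ⟨z, -, ψ, hψ, hlim⟩ := tendsto_subseq_of_bounded Metric.isBounded_closedBall hbdd
  refine ⟨z, φ ∘ ψ, hφ.comp hψ, hlim, fun t => lt_of_le_of_lt ?_ (hφinner (ψ t))⟩
  have : (t : ℝ) ≤ ψ t := by exact_mod_cast hψ.id_le t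
  gcongr

lemma tendsto_lyapunov_zero (h : IsDykstraSeq A D x p q) (hA : Convex ℝ A) {z : E}
    (hzA : z ∈ A) (hzD : z ∈ D) {κ : ℕ → ℕ} (hκ : StrictMono κ)
    (hxz : Tendsto (fun t => x (κ t + 1)) atTop (𝓝 z))
    (hinner : ∀ t : ℕ, -(1 / (t + 1 : ℝ)) < ⟪x 0 - x (κ t) - p (κ t), q (κ t) - x (κ t + 1)⟫) :
    Tendsto (Φ · z) atTop (𝓝 0) := by
  have hL := tendsto_atTop_ciInf (h.lyapunov_antitone hA hzD)
    ⟨0, Set.forall_mem_range.2 fun k => h.lyapunov_nonneg hA k hzA⟩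
  have hd : Tendsto (fun t => x (κ t + 1) - z) atTop (𝓝 0) := by simpa using hxz.sub_const z
  have hup : Tendsto (fun t : ℕ => ‖x (κ t + 1) - z‖ ^ 2 / 2
      + ⟪x 0 - x (κ t + 1), x (κ t + 1) - z⟫ + 1 / (t + 1 : ℝ)) atTop (𝓝 0) := by
    simpa using (((hd.norm.pow 2).div_const 2).add ((tendsto_const_nhds.sub hxz).inner hd)).add
      tendsto_one_div_add_atTop_nhds_zero_nat
  have hle : ⨅ k, Φ k z ≤ 0 := le_of_tendsto_of_tendsto' (hL.comp hκ.tendsto_atTop) hup fun t => by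
    have := h.lyapunov_eq_sub_inner (κ t) hzD
    simp only [Function.comp_apply]
    linarith [hinner t, sq_nonneg ‖q (κ t) - x (κ t + 1)‖]
  have hge : 0 ≤ ⨅ k, Φ k z := ge_of_tendsto' hL fun k => h.lyapunov_nonneg hA k hzA
  rwa [le_antisymm hle hge] at hL

theorem exists_isMinOn_tendsto (h : IsDykstraSeq A D x p q) (hA : Convex ℝ A)
    (hAcl : IsClosed A) [FiniteDimensional ℝ E] (hne : (A ∩ D).Nonempty) :
    ∃ z ∈ A ∩ D, IsMinOn (‖· - x 0‖) (A ∩ D) z ∧ Tendsto x atTop (𝓝 z) := by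
  obtain ⟨y₀, hy₀A, hy₀D⟩ := hne
  obtain ⟨z, κ, hκ, hxz, hinner⟩ := h.exists_subseq_tendsto hA hy₀A hy₀D
  have hzD : z ∈ D := D.closed_of_finiteDimensional.mem_of_tendsto hxz
    (Eventually.of_forall fun t => h.x_succ_mem (κ t))
  have hzA : z ∈ A := by
    have hq : Tendsto (fun t => x (κ t + 1) + (q (κ t) - x (κ t + 1))) atTop (𝓝 (z + 0)) :=
      hxz.add ((h.tendsto_q_sub_x_succ_zero hA hy₀A hy₀D).comp hκ.tendsto_atTop)
    simp only [add_sub_cancel, add_zero] at hq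
    exact hAcl.mem_of_tendsto hq (Eventually.of_forall fun t => h.q_mem (κ t))
  have hΦ := h.tendsto_lyapunov_zero hA hzA hzD hκ hxz hinner
  refine ⟨z, ⟨hzA, hzD⟩, isMinOn_iff.2 fun y ⟨hyA, hyD⟩ => ?_, ?_⟩
  · have hlim := hΦ.add_const (‖y - x 0‖ ^ 2 / 2 - ‖z - x 0‖ ^ 2 / 2)
    rw [zero_add] at hlim
    have hsq : 0 ≤ ‖y - x 0‖ ^ 2 / 2 - ‖z - x 0‖ ^ 2 / 2 :=
      ge_of_tendsto hlim <| Eventually.of_forall fun k => by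
        linarith [h.lyapunov_nonneg hA k hyA, h.lyapunov_eq_add_sq_norm k hyD,
          h.lyapunov_eq_add_sq_norm k hzD]
    exact (pow_le_pow_iff_left₀ (norm_nonneg _) (norm_nonneg _) two_ne_zero).1 (by linarith)
  · refine (tendsto_add_atTop_iff_nat 1).1 (tendsto_iff_norm_sub_tendsto_zero.2 ?_)
    have hsq : Tendsto (fun k => ‖x (k + 1) - z‖ ^ 2) atTop (𝓝 0) :=
      squeeze_zero (g := fun k => 2 * Φ k z) (fun _ => sq_nonneg _)
        (fun k => by linarith [h.sq_norm_le_lyapunov hA k hzA]) (by simpa using hΦ.const_mul 2)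
    simpa using hsq.sqrt

end IsDykstraSeq

section CoordinateMask

variable {ι : Type*} [DecidableEq ι]

def coordMask (s : Finset ι) : EuclideanSpace ℝ ι →ₗ[ℝ] EuclideanSpace ℝ ι where
  toFun y := WithLp.toLp 2 fun j => if j ∈ s then y j else 0
  map_add' y z := by ext j; by_cases hj : j ∈ s <;> simp [hj]
  map_smul' c y := by ext j; by_cases hj : j ∈ s <;> simp [hj]

@[simp]
lemma coordMask_apply (s : Finset ι) (y : EuclideanSpace ℝ ι) (j : ι) :
    coordMask s y j = if j ∈ s then y j else 0 := rfl

lemma coordMask_coordMask (s : Finset ι) (y : EuclideanSpace ℝ ι) :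
    coordMask s (coordMask s y) = coordMask s y := by
  ext j; by_cases hj : j ∈ s <;> simp [hj]

variable {s : Finset ι} {C : Set (EuclideanSpace ℝ ι)}

lemma coordMask_mem_iff (hC : ∀ y z : EuclideanSpace ℝ ι, (∀ j ∈ s, y j = z j) → (y ∈ C ↔ z ∈ C))
    {y : EuclideanSpace ℝ ι} : coordMask s y ∈ C ↔ y ∈ C :=
  hC _ _ fun j hj => by simp [hj]

variable [Fintype ι]

lemma norm_coordMask_le (s : Finset ι) (y : EuclideanSpace ℝ ι) : ‖coordMask s y‖ ≤ ‖y‖ := by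
  rw [EuclideanSpace.norm_eq, EuclideanSpace.norm_eq]
  refine Real.sqrt_le_sqrt (Finset.sum_le_sum fun j _ => ?_)
  by_cases hj : j ∈ s <;> simp [hj, sq_nonneg]

lemma norm_coordMask_sub_le_of_nearest
    (hC : ∀ y z : EuclideanSpace ℝ ι, (∀ j ∈ s, y j = z j) → (y ∈ C ↔ z ∈ C))
    {v q : EuclideanSpace ℝ ι} (hq : ∀ y ∈ C, ‖v - q‖ ≤ ‖v - y‖) {w : EuclideanSpace ℝ ι}
    (hw : w ∈ C) : ‖coordMask s v - coordMask s q‖ ≤ ‖coordMask s v - w‖ := by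
  -- `y` agrees with `v` off `s` and with `w` on `s`, so `y ∈ C` and `v - y` is supported on `s`
  set y := v - coordMask s v + coordMask s w
  have hy : y ∈ C := (hC y w fun j hj => by simp [y, hj]).2 hw
  calc ‖coordMask s v - coordMask s q‖ = ‖coordMask s (v - q)‖ := by rw [map_sub]
    _ ≤ ‖v - q‖ := norm_coordMask_le s _
    _ ≤ ‖v - y‖ := hq y hy
    _ = ‖coordMask s (coordMask s v - w)‖ := by
        rw [map_sub, coordMask_coordMask]; congr 1; simp only [y]; abel
    _ ≤ ‖coordMask s v - w‖ := norm_coordMask_le s _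

end CoordinateMask

section BlockMask

variable {κ ι : Type*}

lemma convex_setOf_forall_apply_mem {C : κ → Set (EuclideanSpace ℝ ι)}
    (hC : ∀ i, Convex ℝ (C i)) :
    Convex ℝ {w : PiLp 2 (fun _ : κ => EuclideanSpace ℝ ι) | ∀ i, w i ∈ C i} :=
  fun _ ha _ hb _ _ hs ht hst i => hC i (ha i) (hb i) hs ht hst

lemma isClosed_setOf_forall_apply_mem {C : κ → Set (EuclideanSpace ℝ ι)}
    (hC : ∀ i, IsClosed (C i)) :
    IsClosed {w : PiLp 2 (fun _ : κ => EuclideanSpace ℝ ι) | ∀ i, w i ∈ C i} := by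
  simp only [Set.ofPred_forall]
  exact isClosed_iInter fun i => (hC i).preimage (PiLp.continuous_apply 2 _ i)

variable [DecidableEq ι] (N : κ → Finset ι)

/-- The product `∏ᵢ ℝ^{Nᵢ}`, with `ℝ^{Nᵢ}` realised inside the `i`-th copy of `ℝⁿ` as the range of
`coordMask (N i)`. -/
def blockMask : (κ → EuclideanSpace ℝ ι) →ₗ[ℝ] PiLp 2 fun _ : κ => EuclideanSpace ℝ ι :=
  (WithLp.linearEquiv 2 ℝ _).symm.toLinearMap ∘ₗ
    LinearMap.pi fun i => coordMask (N i) ∘ₗ LinearMap.proj i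

def diagMask : EuclideanSpace ℝ ι →ₗ[ℝ] PiLp 2 fun _ : κ => EuclideanSpace ℝ ι :=
  blockMask N ∘ₗ LinearMap.pi fun _ => LinearMap.id

@[simp]
lemma blockMask_apply (a : κ → EuclideanSpace ℝ ι) (i : κ) :
    blockMask N a i = coordMask (N i) (a i) := rfl

@[simp]
lemma diagMask_apply (y : EuclideanSpace ℝ ι) (i : κ) :
    diagMask N y i = coordMask (N i) y := rfl

lemma card_filter_mem_pos [Fintype κ] (hN : ∀ j, ∃ i, j ∈ N i) (j : ι) :
    0 < (Finset.univ.filter (j ∈ N ·)).card :=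
  let ⟨i, hi⟩ := hN j
  Finset.card_pos.2 ⟨i, Finset.mem_filter.2 ⟨Finset.mem_univ i, hi⟩⟩

variable [Fintype κ] [Fintype ι]

lemma inner_diagMask_blockMask (u : EuclideanSpace ℝ ι) (a : κ → EuclideanSpace ℝ ι) :
    ⟪diagMask N u, blockMask N a⟫ = ∑ j, u j * ∑ i ∈ Finset.univ.filter (j ∈ N ·), a i j := by
  simp only [PiLp.inner_apply, diagMask_apply, blockMask_apply, coordMask_apply,
    RCLike.inner_apply, conj_trivial, Finset.mul_sum, Finset.sum_filter]
  rw [Finset.sum_comm]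
  refine Finset.sum_congr rfl fun j _ => Finset.sum_congr rfl fun i _ => ?_
  split_ifs <;> ring

lemma norm_sq_diagMask (u : EuclideanSpace ℝ ι) :
    ‖diagMask N u‖ ^ 2 = ∑ j, ((Finset.univ.filter (j ∈ N ·)).card : ℝ) * u j ^ 2 := by
  rw [← real_inner_self_eq_norm_sq]
  change ⟪diagMask N u, blockMask N fun _ => u⟫ = _
  rw [inner_diagMask_blockMask]
  refine Finset.sum_congr rfl fun j _ => ?_
  simp only [Finset.sum_const, nsmul_eq_mul]
  ring

lemma norm_le_norm_diagMask (hN : ∀ j, ∃ i, j ∈ N i) (u : EuclideanSpace ℝ ι) :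
    ‖u‖ ≤ ‖diagMask N u‖ := by
  refine (pow_le_pow_iff_left₀ (norm_nonneg _) (norm_nonneg _) two_ne_zero).1 ?_
  rw [norm_sq_diagMask, EuclideanSpace.norm_sq_eq]
  refine Finset.sum_le_sum fun j _ => ?_
  have : (1 : ℝ) ≤ (Finset.univ.filter (j ∈ N ·)).card := by
    exact_mod_cast card_filter_mem_pos N hN j
  rw [Real.norm_eq_abs, sq_abs]
  nlinarith [sq_nonneg (u j)]

lemma norm_blockMask_sub_le_of_nearest {C : κ → Set (EuclideanSpace ℝ ι)}
    (hC : ∀ i (y z : EuclideanSpace ℝ ι), (∀ j ∈ N i, y j = z j) → (y ∈ C i ↔ z ∈ C i))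
    {v q : κ → EuclideanSpace ℝ ι} (hq : ∀ i, ∀ y ∈ C i, ‖v i - q i‖ ≤ ‖v i - y‖)
    {w : PiLp 2 (fun _ : κ => EuclideanSpace ℝ ι)} (hw : ∀ i, w i ∈ C i) :
    ‖blockMask N v - blockMask N q‖ ≤ ‖blockMask N v - w‖ := by
  refine (pow_le_pow_iff_left₀ (norm_nonneg _) (norm_nonneg _) two_ne_zero).1 ?_
  rw [PiLp.norm_sq_eq_of_L2, PiLp.norm_sq_eq_of_L2]
  refine Finset.sum_le_sum fun i _ => ?_
  simp only [PiLp.sub_apply, blockMask_apply]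
  exact pow_le_pow_left₀ (norm_nonneg _)
    (norm_coordMask_sub_le_of_nearest (hC i) (hq i) (hw i)) 2

lemma isDykstraSeq_blockMask {C : κ → Set (EuclideanSpace ℝ ι)} {x : ℕ → EuclideanSpace ℝ ι}
    {p q : ℕ → κ → EuclideanSpace ℝ ι} (hN : ∀ j, ∃ i, j ∈ N i)
    (hC : ∀ i (y z : EuclideanSpace ℝ ι), (∀ j ∈ N i, y j = z j) → (y ∈ C i ↔ z ∈ C i))
    (hq : ∀ k i, q k i ∈ C i ∧ ∀ y ∈ C i, ‖x k + p k i - q k i‖ ≤ ‖x k + p k i - y‖)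
    (hp0 : ∀ i, p 0 i = 0)
    (hxrec : ∀ k j, x (k + 1) j = (∑ i ∈ Finset.univ.filter (j ∈ N ·), q k i j) /
      ((Finset.univ.filter (j ∈ N ·)).card : ℝ))
    (hprec : ∀ k i, p (k + 1) i = x k + p k i - q k i) :
    IsDykstraSeq {w | ∀ i, w i ∈ C i} (LinearMap.range (diagMask N))
      (fun k => diagMask N (x k)) (fun k => blockMask N (p k)) (fun k => blockMask N (q k)) where
  x_zero_mem := LinearMap.mem_range_self _ _
  p_zero := by rw [show p 0 = 0 from funext hp0, map_zero]
  q_mem k i := (coordMask_mem_iff (hC i)).2 (hq k i).1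
  q_nearest k w hw := by
    have : diagMask N (x k) + blockMask N (p k) = blockMask N fun i => x k + p k i := by
      rw [diagMask, LinearMap.comp_apply, ← map_add]; rfl
    rw [this]
    exact norm_blockMask_sub_le_of_nearest N hC (fun i => (hq k i).2) hw
  p_succ k := by
    rw [show p (k + 1) = (fun _ => x k) + p k - q k from funext (hprec k), map_sub, map_add]; rfl
  x_succ_mem k := LinearMap.mem_range_self _ _
  q_sub_x_succ_mem k := by
    rw [Submodule.mem_orthogonal]
    rintro _ ⟨u, rfl⟩
    have : blockMask N (q k) - diagMask N (x (k + 1)) =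
        blockMask N (q k - fun _ => x (k + 1)) := by
      rw [map_sub]; rfl
    rw [this, inner_diagMask_blockMask]
    refine Finset.sum_eq_zero fun j _ => ?_
    have hcard : ((Finset.univ.filter (j ∈ N ·)).card : ℝ) ≠ 0 := by
      exact_mod_cast (card_filter_mem_pos N hN j).ne'
    simp only [Pi.sub_apply, PiLp.sub_apply, Finset.sum_sub_distrib, Finset.sum_const,
      nsmul_eq_mul, hxrec, mul_div_cancel₀ _ hcard, sub_self, mul_zero]

end BlockMask

/-- The Component-Averaged Dykstra iterates
`x^{(k+1)}_j = (1/l_j) ∑_{i ∈ L_j} (P_{Cᵢ}(x^{(k)} + p^{(k)}_i))_j`,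
`p^{(k+1)}_i = x^{(k)} + p^{(k)}_i − P_{Cᵢ}(x^{(k)} + p^{(k)}_i)`, started at `x` with
`p^{(1)}_i = 0`, converge to the weighted projection
`P^l_C(x) = argmin_{y ∈ C} ∑_j l_j (y_j − x_j)²`, where `C = ∩ᵢ Cᵢ` is nonempty. -/
theorem stmt9 {m n : ℕ} (N : Fin m → Finset (Fin n)) (hcov : ∀ j, ∃ i, j ∈ N i)
    (C : Fin m → Set (EuclideanSpace ℝ (Fin n)))
    (hcl : ∀ i, IsClosed (C i)) (hconv : ∀ i, Convex ℝ (C i))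
    (hdep : ∀ i (x y : EuclideanSpace ℝ (Fin n)),
      (∀ j ∈ N i, x j = y j) → (x ∈ C i ↔ y ∈ C i))
    (hne : (⋂ i, C i).Nonempty)
    (x0 : EuclideanSpace ℝ (Fin n))
    (x : ℕ → EuclideanSpace ℝ (Fin n))
    (p q : ℕ → Fin m → EuclideanSpace ℝ (Fin n))
    (hq : ∀ k i, q k i ∈ C i ∧
      ∀ y ∈ C i, ‖x k + p k i - q k i‖ ≤ ‖x k + p k i - y‖)
    (hx0 : x 0 = x0) (hp0 : ∀ i, p 0 i = 0)
    (hxrec : ∀ k j, x (k + 1) j =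
      (∑ i ∈ Finset.univ.filter fun i => j ∈ N i, q k i j) / (lcount N j : ℝ))
    (hprec : ∀ k i, p (k + 1) i = x k + p k i - q k i) :
    ∃ z : EuclideanSpace ℝ (Fin n),
      (z ∈ ⋂ i, C i ∧
        ∀ y ∈ ⋂ i, C i,
          ∑ j, (lcount N j : ℝ) * (z j - x0 j) ^ 2 ≤
            ∑ j, (lcount N j : ℝ) * (y j - x0 j) ^ 2) ∧
      Filter.Tendsto x Filter.atTop (nhds z) := by
  subst hx0
  have hdiag : ∀ y, diagMask N y ∈ {w | ∀ i, w i ∈ C i} ↔ y ∈ ⋂ i, C i := fun y => by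
    simp only [Set.mem_ofPred_eq, diagMask_apply, coordMask_mem_iff (hdep _), Set.mem_iInter]
  have hweight : ∀ y, ∑ j, (lcount N j : ℝ) * (y j - x 0 j) ^ 2
      = ‖diagMask N y - diagMask N (x 0)‖ ^ 2 := fun y => by
    rw [← map_sub, norm_sq_diagMask]; rfl
  obtain ⟨y₀, hy₀⟩ := hne
  obtain ⟨_, ⟨hzA, z, rfl⟩, hmin, hlim⟩ :=
    (isDykstraSeq_blockMask N hcov hdep hq hp0 hxrec hprec).exists_isMinOn_tendsto
      (convex_setOf_forall_apply_mem hconv) (isClosed_setOf_forall_apply_mem hcl)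
      ⟨_, (hdiag y₀).2 hy₀, LinearMap.mem_range_self _ _⟩
  refine ⟨z, ⟨(hdiag z).1 hzA, fun y hy => ?_⟩, ?_⟩
  · rw [hweight, hweight]
    exact pow_le_pow_left₀ (norm_nonneg _)
      (isMinOn_iff.1 hmin _ ⟨(hdiag y).2 hy, LinearMap.mem_range_self _ _⟩) 2
  · refine tendsto_iff_norm_sub_tendsto_zero.2 (squeeze_zero (fun _ => norm_nonneg _)
      (fun k => ?_) (tendsto_iff_norm_sub_tendsto_zero.1 hlim))
    rw [← map_sub]
    exact norm_le_norm_diagMask N hcov _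
end

section
/- Let C = ∩_{i=1}^m Cᵢ be convex with each Cᵢ depending only on coordinates Nᵢ, and let 𝒫 be a partition of {1,…,m} such that constraints in different parts share no variables (i.e., i, k in different parts implies Nᵢ ∩ N_k = ∅). Given z ∈ C, v ∈ ℝⁿ, and for each part p the factor α_p = min_{i ∈ p} α_{Cᵢ} where α_{Cᵢ} = max{α ≥ 0 : z + α v ∈ Cᵢ}, define y by y_j = z_j + min{1, α_p}·v_j for j ∈ Nᵢ, i ∈ p. Then y ∈ C. -/
/-- Sparse vector clipping: with `C = ∩ᵢ Cᵢ`, each `Cᵢ` depending only on the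
coordinates `Nᵢ`, and `Part` a partition of the constraints such that constraints in
different parts share no variables, the output `y` with
`y_j = z_j + min 1 (α_p) • v_j` for `j ∈ Nᵢ`, `i ∈ p`, where
`α_p = min_{i ∈ p} α_{Cᵢ}` and `α_{Cᵢ} = max {α ≥ 0 : z + α v ∈ Cᵢ}`, is feasible. -/
theorem stmt16 {m n : ℕ} (N : Fin m → Set (Fin n)) (hcov : ∀ j, ∃ i, j ∈ N i)
    (C : Fin m → Set (EuclideanSpace ℝ (Fin n)))
    (hcl : ∀ i, IsClosed (C i)) (hconv : ∀ i, Convex ℝ (C i))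
    (hdep : ∀ i (x y : EuclideanSpace ℝ (Fin n)),
      (∀ j ∈ N i, x j = y j) → (x ∈ C i ↔ y ∈ C i))
    (Part : Set (Set (Fin m)))
    (hpart : ∀ i, ∃ p ∈ Part, i ∈ p)
    (hdisj : ∀ p ∈ Part, ∀ q ∈ Part, p ≠ q → ∀ i ∈ p, ∀ k ∈ q, N i ∩ N k = ∅)
    (z : EuclideanSpace ℝ (Fin n)) (hz : ∀ i, z ∈ C i)
    (v : EuclideanSpace ℝ (Fin n))
    (α : Fin m → ℝ)
    (hα : ∀ i, IsGreatest {a : ℝ | 0 ≤ a ∧ z + a • v ∈ C i} (α i))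
    (y : EuclideanSpace ℝ (Fin n))
    (hy : ∀ p ∈ Part, ∀ i ∈ p, ∀ j ∈ N i,
      y j = z j + min 1 (sInf (α '' p)) * v j) :
    y ∈ ⋂ i, C i := by
  -- each α k ≥ 0
  have hα0 : ∀ k, 0 ≤ α k := fun k =>
    (hα k).2 ⟨le_refl 0, by simpa using hz k⟩
  rw [Set.mem_iInter]
  intro i
  obtain ⟨p, hpP, hip⟩ := hpart i
  set t : ℝ := min 1 (sInf (α '' p)) with ht
  -- bounds on t
  have hbdd : BddBelow (α '' p) := ⟨0, by rintro _ ⟨k, -, rfl⟩; exact hα0 k⟩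
  have hinf_le : sInf (α '' p) ≤ α i := csInf_le hbdd ⟨i, hip, rfl⟩
  have hinf_nonneg : 0 ≤ sInf (α '' p) :=
    le_csInf ⟨α i, ⟨i, hip, rfl⟩⟩ (by rintro _ ⟨k, -, rfl⟩; exact hα0 k)
  have ht0 : 0 ≤ t := le_min zero_le_one hinf_nonneg
  have htα : t ≤ α i := le_trans (min_le_right _ _) hinf_le
  -- z + t • v ∈ C i
  have hmem : z + t • v ∈ C i := by
    rcases eq_or_lt_of_le htα with h | h
    · have := (hα i).1.2
      rwa [h]
    · have hαpos : 0 < α i := lt_of_le_of_lt ht0 h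
      have hs0 : 0 ≤ t / α i := div_nonneg ht0 hαpos.le
      have hs1 : t / α i ≤ 1 := (div_le_one hαpos).mpr htα
      have := (hconv i) (hz i) (hα i).1.2 (a := 1 - t / α i) (b := t / α i)
        (by linarith) hs0 (by ring)
      have heq : (1 - t / α i) • z + (t / α i) • (z + α i • v) = z + t • v := by
        rw [smul_add, smul_smul, div_mul_cancel₀ _ hαpos.ne']
        module
      rwa [heq] at this
  -- y agrees with z + t • v on N i
  rw [← hdep i (z + t • v) y]
  · exact hmem
  · intro j hj
    rw [hy p hpP i hip j hj]
    simp [t, PiLp.add_apply, PiLp.smul_apply, smul_eq_mul]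
end

section
/- Let C = {x ∈ ℝⁿ : Ax ≤ b} be nonempty with the surrogate-gradient map defined by P_{H_x} = I when x ∈ int(C). If P_C(x) lies in the interior of all but exactly one of the half-spaces Cᵢ = {y : Aᵢᵀy ≤ bᵢ} (say it lies on the boundary of C_k only), then in a neighborhood of x the projection P_C coincides with the projection onto the half-space C_k, and its Jacobian at x equals I − a a^T/‖a‖² with a = A_k if x ∉ C, which equals P_{H_x}. -/
open scoped RealInnerProductSpace

open Topology

/-!
The nearest point `p = P_C x` satisfies the variational inequality `⟪x - p, w - p⟫ ≤ 0` on `C`.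
Only the `k`-th constraint is active at `p`, so every direction `v` with `⟪A k, v⟫ ≤ 0` is
feasible from `p`, and Farkas' lemma makes `x - p` a nonnegative multiple of `A k`. Hence the
projection of `x` onto the half-space `C_k` is `p`. For `y` near `x`, the projection of `y` onto
`C_k` still satisfies the other constraints strictly, so it lies in `C ⊆ C_k` and is therefore
also the nearest point of `C`. Near `x`, `P_C` is then the affine map
`y ↦ y - (⟪A k, y⟫ - b k) / ‖A k‖² • A k`, and `d = A k / ‖A k‖`.
-/

section

variable {E ι : Type*} [NormedAddCommGroup E] [InnerProductSpace ℝ E]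

theorem real_inner_sub_nonpos_of_forall_norm_sub_le {K : Set E} (hK : Convex ℝ K) {x p : E}
    (hp : p ∈ K) (hmin : ∀ w ∈ K, ‖x - p‖ ≤ ‖x - w‖) : ∀ w ∈ K, ⟪x - p, w - p⟫ ≤ 0 := by
  refine (norm_eq_iInf_iff_real_inner_le_zero hK hp).1 (le_antisymm ?_ ?_)
  · have : Nonempty K := ⟨⟨p, hp⟩⟩
    exact le_ciInf fun w => hmin w w.2
  · exact ciInf_le ⟨0, Set.forall_mem_range.2 fun _ => norm_nonneg _⟩ (⟨p, hp⟩ : K)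

theorem eq_of_norm_sub_le_of_real_inner_sub_nonpos {y p q : E} (hle : ‖y - p‖ ≤ ‖y - q‖)
    (hq : ⟪y - q, p - q⟫ ≤ 0) : p = q := by
  have hexp : ‖y - p‖ ^ 2 = ‖y - q‖ ^ 2 - 2 * ⟪y - q, p - q⟫ + ‖p - q‖ ^ 2 := by
    rw [← norm_sub_sq_real, sub_sub_sub_cancel_right]
  have : ‖p - q‖ ^ 2 ≤ 0 := by nlinarith [norm_nonneg (y - p)]
  exact sub_eq_zero.1 (norm_eq_zero.1 (by nlinarith [norm_nonneg (p - q)]))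

/-- Farkas' lemma for a single inequality. -/
theorem exists_nonneg_smul_eq_of_real_inner_nonpos {a u : E} (ha : a ≠ 0)
    (h : ∀ v, ⟪a, v⟫ ≤ 0 → ⟪u, v⟫ ≤ 0) : ∃ t : ℝ, 0 ≤ t ∧ t • a = u := by
  have hu : u ∈ (ℝ ∙ a)ᗮᗮ := by
    refine (Submodule.mem_orthogonal _ u).2 fun v hv => ?_
    have hav : ⟪a, v⟫ = 0 := Submodule.mem_orthogonal_singleton_iff_inner_right.1 hv
    have h₁ := h v hav.le
    have h₂ := h (-v) (by rw [inner_neg_right, hav, neg_zero])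
    rw [inner_neg_right] at h₂
    rw [real_inner_comm]
    linarith
  obtain ⟨t, rfl⟩ := Submodule.mem_span_singleton.1 ((ℝ ∙ a).orthogonal_orthogonal ▸ hu)
  refine ⟨t, nonneg_of_mul_nonneg_left ?_ (pow_pos (norm_pos_iff.2 ha) 2), rfl⟩
  have := h (-a) (by simp)
  rwa [inner_neg_right, real_inner_smul_left, real_inner_self_eq_norm_sq, neg_nonpos] at this

theorem real_inner_normalize_smul_normalize_of_smul (a v : E) {t : ℝ} (ht : t ≠ 0) :
    ⟪‖t • a‖⁻¹ • (t • a), v⟫ • (‖t • a‖⁻¹ • (t • a)) = (‖a‖ ^ 2)⁻¹ • (⟪a, v⟫ • a) := by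
  by_cases ha : a = 0
  · simp [ha]
  have : ‖a‖ ≠ 0 := norm_ne_zero_iff.2 ha
  simp only [real_inner_smul_left, norm_smul, Real.norm_eq_abs, smul_smul]
  congr 1
  field_simp
  rw [sq_abs]

def polyhedron (A : ι → E) (b : ι → ℝ) : Set E := {y | ∀ i, ⟪A i, y⟫ ≤ b i}

theorem convex_polyhedron (A : ι → E) (b : ι → ℝ) : Convex ℝ (polyhedron A b) := by
  simp only [polyhedron, Set.ofPred_forall]
  exact convex_iInter fun i => convex_halfSpace_le (innerₛₗ ℝ (A i)).isLinear _

theorem isOpen_setOf_forall_ne_real_inner_lt [Finite ι] (A : ι → E) (b : ι → ℝ) (k : ι) :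
    IsOpen {z : E | ∀ i ≠ k, ⟪A i, z⟫ < b i} := by
  simp only [Set.ofPred_forall]
  exact isOpen_iInter_of_finite fun i => isOpen_iInter_of_finite fun _ =>
    isOpen_lt (by fun_prop) continuous_const

theorem exists_pos_add_smul_mem_polyhedron [Finite ι] {A : ι → E} {b : ι → ℝ} {p v : E}
    {k : ι} (hp : p ∈ polyhedron A b) (hothers : ∀ i ≠ k, ⟪A i, p⟫ < b i)
    (hv : ⟪A k, v⟫ ≤ 0) : ∃ ε : ℝ, 0 < ε ∧ p + ε • v ∈ polyhedron A b := by
  have hnear : ∀ᶠ ε : ℝ in 𝓝 0, ∀ i ≠ k, ⟪A i, p + ε • v⟫ < b i :=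
    ((isOpen_setOf_forall_ne_real_inner_lt A b k).preimage (by fun_prop)).mem_nhds
      (by simpa using hothers)
  obtain ⟨ε, hε, hεpos⟩ := ((hnear.filter_mono nhdsWithin_le_nhds).and
    (self_mem_nhdsWithin (s := Set.Ioi 0))).exists
  refine ⟨ε, hεpos, fun i => ?_⟩
  by_cases hi : i = k
  · subst hi
    rw [inner_add_right, real_inner_smul_right]
    nlinarith [hp i]
  · exact (hε i hi).le

theorem exists_nonneg_smul_eq_sub_of_isNearest_polyhedron [Finite ι] {A : ι → E}
    {b : ι → ℝ} {x p : E} {k : ι} (hAk : A k ≠ 0) (hp : p ∈ polyhedron A b)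
    (hmin : ∀ w ∈ polyhedron A b, ‖x - p‖ ≤ ‖x - w‖) (hothers : ∀ i ≠ k, ⟪A i, p⟫ < b i) :
    ∃ t : ℝ, 0 ≤ t ∧ t • A k = x - p := by
  have hnormal := real_inner_sub_nonpos_of_forall_norm_sub_le (convex_polyhedron A b) hp hmin
  refine exists_nonneg_smul_eq_of_real_inner_nonpos hAk fun v hv => ?_
  obtain ⟨ε, hε, hmem⟩ := exists_pos_add_smul_mem_polyhedron hp hothers hv
  have := hnormal _ hmem
  rw [add_sub_cancel_left, real_inner_smul_right] at this
  exact nonpos_of_mul_nonpos_right this hε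

noncomputable def halfspaceProj (a : E) (β : ℝ) (y : E) : E :=
  y + min 0 ((β - ⟪a, y⟫) / ‖a‖ ^ 2) • a

theorem continuous_halfspaceProj (a : E) (β : ℝ) : Continuous (halfspaceProj a β) := by
  unfold halfspaceProj
  fun_prop

theorem real_inner_halfspaceProj_le {a : E} (ha : a ≠ 0) (β : ℝ) (y : E) :
    ⟪a, halfspaceProj a β y⟫ ≤ β := by
  rw [halfspaceProj, inner_add_right, real_inner_smul_right, real_inner_self_eq_norm_sq]
  have := min_le_right 0 ((β - ⟪a, y⟫) / ‖a‖ ^ 2)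
  rw [le_div_iff₀ (pow_pos (norm_pos_iff.2 ha) 2)] at this
  linarith

theorem real_inner_sub_halfspaceProj_nonpos {a w : E} {β : ℝ} (hw : ⟪a, w⟫ ≤ β) (y : E) :
    ⟪y - halfspaceProj a β y, w - halfspaceProj a β y⟫ ≤ 0 := by
  by_cases ha : a = 0
  · simp [halfspaceProj, ha]
  set c := (β - ⟪a, y⟫) / ‖a‖ ^ 2 with hc_def
  have hc : c * ‖a‖ ^ 2 = β - ⟪a, y⟫ := div_mul_cancel₀ _ (by positivity)
  have hy : y - halfspaceProj a β y = -(min 0 c • a) := by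
    rw [halfspaceProj, sub_add_cancel_left]
  rw [hy, inner_neg_left, real_inner_smul_left, halfspaceProj, inner_sub_right,
    inner_add_right, real_inner_smul_right, real_inner_self_eq_norm_sq, ← hc_def]
  rcases min_cases 0 c with ⟨h, -⟩ | ⟨h, hc0⟩ <;> rw [h]
  · simp
  · nlinarith [mul_nonneg (neg_nonneg.2 hc0.le) (sub_nonneg.2 hw)]

theorem halfspaceProj_add_smul {a p : E} {β t : ℝ} (ha : a ≠ 0) (hp : ⟪a, p⟫ = β) (ht : 0 ≤ t) :
    halfspaceProj a β (p + t • a) = p := by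
  have : (β - ⟪a, p + t • a⟫) / ‖a‖ ^ 2 = -t := by
    rw [inner_add_right, real_inner_smul_right, real_inner_self_eq_norm_sq, hp]
    field_simp
    ring
  rw [halfspaceProj, this, min_eq_right (neg_nonpos.2 ht), neg_smul, add_neg_cancel_right]

theorem hasFDerivAt_halfspaceProj {a x : E} {β : ℝ} (hx : β < ⟪a, x⟫) :
    HasFDerivAt (halfspaceProj a β)
      (ContinuousLinearMap.id ℝ E - (‖a‖ ^ 2)⁻¹ • (innerSL ℝ a).smulRight a) x := by
  set M := ContinuousLinearMap.id ℝ E - (‖a‖ ^ 2)⁻¹ • (innerSL ℝ a).smulRight a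
  have haffine : ∀ y, β < ⟪a, y⟫ → halfspaceProj a β y = M y + (β / ‖a‖ ^ 2) • a := by
    intro y hy
    rw [halfspaceProj, min_eq_right (div_nonpos_of_nonpos_of_nonneg (by linarith) (by positivity))]
    simp only [M, sub_apply, ContinuousLinearMap.id_apply, smul_apply,
      ContinuousLinearMap.smulRight_apply, innerSL_apply_apply]
    match_scalars <;> ring
  have hnear : ∀ᶠ y in 𝓝 x, β < ⟪a, y⟫ :=
    (isOpen_lt continuous_const (by fun_prop)).mem_nhds hx
  exact (M.hasFDerivAt.add_const _).congr_of_eventuallyEq (hnear.mono haffine)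

theorem eventuallyEq_halfspaceProj_of_isNearest_polyhedron [Finite ι]
    {A : ι → E} {b : ι → ℝ} {P : E → E}
    (hP : ∀ y, P y ∈ polyhedron A b ∧ ∀ w ∈ polyhedron A b, ‖y - P y‖ ≤ ‖y - w‖)
    {x : E} {k : ι} (hAk : A k ≠ 0)
    (hothers : ∀ i ≠ k, ⟪A i, halfspaceProj (A k) (b k) x⟫ < b i) :
    P =ᶠ[𝓝 x] halfspaceProj (A k) (b k) := by
  have hnear : ∀ᶠ y in 𝓝 x, ∀ i ≠ k, ⟪A i, halfspaceProj (A k) (b k) y⟫ < b i :=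
    ((isOpen_setOf_forall_ne_real_inner_lt A b k).preimage
      (continuous_halfspaceProj _ _)).mem_nhds hothers
  filter_upwards [hnear] with y hy
  have hq : halfspaceProj (A k) (b k) y ∈ polyhedron A b := fun i => by
    by_cases hi : i = k
    · subst hi
      exact real_inner_halfspaceProj_le hAk _ _
    · exact (hy i hi).le
  exact eq_of_norm_sub_le_of_real_inner_sub_nonpos ((hP y).2 _ hq)
    (real_inner_sub_halfspaceProj_nonpos ((hP y).1 k) y)

end

theorem stmt18_general {n m : ℕ} (A : Fin m → EuclideanSpace ℝ (Fin n)) (b : Fin m → ℝ)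
    (C : Set (EuclideanSpace ℝ (Fin n))) (hC : C = {y | ∀ i, ⟪A i, y⟫ ≤ b i})
    (projC : EuclideanSpace ℝ (Fin n) → EuclideanSpace ℝ (Fin n))
    (hproj : ∀ y, projC y ∈ C ∧ ∀ w ∈ C, ‖y - projC y‖ ≤ ‖y - w‖)
    (x : EuclideanSpace ℝ (Fin n)) (hx : x ∉ C)
    (k : Fin m) (hAk : A k ≠ 0)
    (hk : ⟪A k, projC x⟫ = b k)
    (hothers : ∀ i, i ≠ k → ⟪A i, projC x⟫ < b i)
    (d : EuclideanSpace ℝ (Fin n)) (hd : d = ‖x - projC x‖⁻¹ • (x - projC x))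
    (M : EuclideanSpace ℝ (Fin n) →L[ℝ] EuclideanSpace ℝ (Fin n))
    (hM : M = ContinuousLinearMap.id ℝ (EuclideanSpace ℝ (Fin n)) -
      (‖A k‖ ^ 2)⁻¹ • (innerSL ℝ (A k)).smulRight (A k)) :
    (∃ U ∈ nhds x, ∀ y ∈ U,
        projC y = y + min 0 ((b k - ⟪A k, y⟫) / ‖A k‖ ^ 2) • A k) ∧
      HasFDerivAt projC M x ∧
      ∀ v, M v = v - ⟪d, v⟫ • d := by
  change C = polyhedron A b at hC
  subst hC hd hM
  set p := projC x
  obtain ⟨t, ht, hxp⟩ := exists_nonneg_smul_eq_sub_of_isNearest_polyhedron hAk (hproj x).1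
    (hproj x).2 hothers
  have ht0 : t ≠ 0 := by
    rintro rfl
    rw [zero_smul, eq_comm, sub_eq_zero] at hxp
    exact hx (hxp ▸ (hproj x).1)
  have hx_eq : x = p + t • A k := by rw [hxp, add_sub_cancel]
  have hfx : halfspaceProj (A k) (b k) x = p := by
    rw [hx_eq, halfspaceProj_add_smul hAk hk ht]
  have hlocal : projC =ᶠ[𝓝 x] halfspaceProj (A k) (b k) :=
    eventuallyEq_halfspaceProj_of_isNearest_polyhedron hproj hAk (hfx ▸ hothers)
  have hxk : b k < ⟪A k, x⟫ := by
    rw [hx_eq, inner_add_right, real_inner_smul_right, real_inner_self_eq_norm_sq, hk]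
    have := mul_pos (ht.lt_of_ne' ht0) (pow_pos (norm_pos_iff.2 hAk) 2)
    linarith
  refine ⟨⟨_, hlocal, fun y hy => hy⟩,
    (hasFDerivAt_halfspaceProj hxk).congr_of_eventuallyEq hlocal, fun v => ?_⟩
  rw [← hxp, real_inner_normalize_smul_normalize_of_smul _ _ ht0]
  rfl

/-- Exactness of the surrogate gradient on a facet: if `P_C x` lies on the boundary of
exactly one defining half-space `C_k` (with non-redundant `A k ≠ 0`) and in the interior
of all the others, and `x ∉ C`, then near `x` the projection `P_C` coincides with the
projection onto the half-space `C_k`, its Jacobian at `x` is `I − a aᵀ/‖a‖²` with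
`a = A k`, and this Jacobian equals the surrogate `P_{H_x} = I − d_x d_xᵀ`. -/
theorem stmt18 {n m : ℕ} (A : Fin m → EuclideanSpace ℝ (Fin n)) (b : Fin m → ℝ)
    (C : Set (EuclideanSpace ℝ (Fin n))) (hC : C = {y | ∀ i, ⟪A i, y⟫ ≤ b i})
    (hCne : C.Nonempty)
    (projC : EuclideanSpace ℝ (Fin n) → EuclideanSpace ℝ (Fin n))
    (hproj : ∀ y, projC y ∈ C ∧ ∀ w ∈ C, ‖y - projC y‖ ≤ ‖y - w‖)
    (x : EuclideanSpace ℝ (Fin n)) (hx : x ∉ C)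
    (k : Fin m) (hAk : A k ≠ 0)
    (hk : ⟪A k, projC x⟫ = b k)
    (hothers : ∀ i, i ≠ k → ⟪A i, projC x⟫ < b i)
    (d : EuclideanSpace ℝ (Fin n)) (hd : d = ‖x - projC x‖⁻¹ • (x - projC x))
    (M : EuclideanSpace ℝ (Fin n) →L[ℝ] EuclideanSpace ℝ (Fin n))
    (hM : M = ContinuousLinearMap.id ℝ (EuclideanSpace ℝ (Fin n)) -
      (‖A k‖ ^ 2)⁻¹ • (innerSL ℝ (A k)).smulRight (A k)) :
    (∃ U ∈ nhds x, ∀ y ∈ U,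
        projC y = y + min 0 ((b k - ⟪A k, y⟫) / ‖A k‖ ^ 2) • A k) ∧
      HasFDerivAt projC M x ∧
      ∀ v, M v = v - ⟪d, v⟫ • d :=
  stmt18_general A b C hC projC hproj x hx k hAk hk hothers d hd M hM
end
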